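/- arXiv:2410.15535 — 2 statements merged into one kernel-verified Lean document; each statement's English description precedes it below -/
import Mathlib

section
/- Let 0 ≤ R₀ < R₁ and let G : ℂ → ℂ be holomorphic on the annulus A(R₀,R₁) = {z ∈ ℂ : R₀ < |z| < R₁}. Suppose that ∫₀^{2π} G(r·e^{iθ})² dθ = 0 for some r with R₀ < r < R₁, and that for every ρ with R₀ < ρ < R₁ equality 2·ρ²·∫₀^{2π} ‖G′(ρ·e^{iθ})‖² dθ = ∫₀^{2π} ‖G(ρ·e^{iθ})‖² dθ holds. Then G is identically zero on A(R₀,R₁). -/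
/-!
On the circle `|z| = ρ` write `G(ρe^{iθ}) = ∑ cₙ(ρ) e^{inθ}`. Holomorphy on the annulus makes
`cₙ(ρ) = aₙ ρⁿ` (Cauchy's theorem for `z⁻ⁿ⁻¹ G`) and gives `ρ cₙ₋₁(G') = n cₙ(G)`, so by Parseval
the hypothesis at radius `ρ` reads `∑ (2n² - 1) ‖aₙ‖² ρ²ⁿ = 0`. Every coefficient `2n² - 1` with
`n ≠ 0` is positive, and comparing three radii in geometric progression kills all `aₙ`:
the combination `ρ₁²ⁿ + ρ₃²ⁿ - 2ρ₂²ⁿ = (ρ₁ⁿ - ρ₃ⁿ)²` is positive for `n ≠ 0` and zero for `n = 0`.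
-/

open Complex Real MeasureTheory Metric Set

noncomputable def circleFourierCoeff (f : ℂ → ℂ) (ρ : ℝ) (n : ℤ) : ℂ :=
  fourierCoeffOn Real.two_pi_pos (fun θ => f (circleMap 0 ρ θ)) n

lemma continuous_comp_circleMap {f : ℂ → ℂ} {ρ : ℝ} (hρ : 0 ≤ ρ)
    (hf : ContinuousOn f (sphere 0 ρ)) : Continuous fun θ => f (circleMap 0 ρ θ) :=
  hf.comp_continuous (continuous_circleMap 0 ρ) fun θ => circleMap_mem_sphere 0 hρ θ

lemma hasSum_sq_circleFourierCoeff {f : ℂ → ℂ} {ρ : ℝ} (hρ : 0 ≤ ρ)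
    (hf : ContinuousOn f (sphere 0 ρ)) :
    HasSum (fun n => ‖circleFourierCoeff f ρ n‖ ^ 2)
      ((2 * π)⁻¹ * ∫ θ in 0..2 * π, ‖f (circleMap 0 ρ θ)‖ ^ 2) := by
  obtain ⟨C, hC⟩ := (isCompact_sphere 0 ρ).exists_bound_of_continuousOn hf
  have hL2 : MemLp (fun θ => f (circleMap 0 ρ θ)) 2 (volume.restrict (Ioc 0 (2 * π))) :=
    .of_bound (continuous_comp_circleMap hρ hf).aestronglyMeasurable C
      (ae_of_all _ fun θ => hC _ (circleMap_mem_sphere 0 hρ θ))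
  simpa [circleFourierCoeff] using hasSum_sq_fourierCoeffOn two_pi_pos hL2

lemma eqOn_zero_of_circleFourierCoeff_eq_zero {f : ℂ → ℂ} {ρ : ℝ} (hρ : 0 ≤ ρ)
    (hf : ContinuousOn f (sphere 0 ρ)) (h : ∀ n, circleFourierCoeff f ρ n = 0) :
    EqOn f 0 (sphere 0 ρ) := by
  set g : ℝ → ℝ := fun θ => ‖f (circleMap 0 ρ θ)‖ ^ 2
  have hg : Continuous g := (continuous_comp_circleMap hρ hf).norm.pow 2
  have hint : ∫ θ in 0..2 * π, g θ = 0 := by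
    have hsum := hasSum_sq_circleFourierCoeff hρ hf
    simp only [h, norm_zero, ne_eq, OfNat.ofNat_ne_zero, not_false_eq_true, zero_pow] at hsum
    simpa [pi_ne_zero] using hsum.unique hasSum_zero
  have hae : g =ᵐ[volume.restrict (Ioc 0 (2 * π))] 0 :=
    (intervalIntegral.integral_eq_zero_iff_of_le_of_nonneg_ae two_pi_pos.le
      (ae_of_all _ fun θ => by positivity) (hg.intervalIntegrable _ _)).1 hint
  have hg0 := Measure.eqOn_Ioc_of_ae_eq volume hae hg.continuousOn continuousOn_const
  intro z hz
  obtain ⟨θ, hθ, hzθ⟩ := (periodic_circleMap 0 ρ).exists_mem_Ioc two_pi_pos (arg z) 0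
  rw [zero_add] at hθ
  have hz' : z = circleMap 0 ρ θ := by
    rw [← hzθ, circleMap_zero, ← mem_sphere_zero_iff_norm.1 hz, norm_mul_exp_arg_mul_I]
  simpa [g, hz'] using hg0 hθ

lemma circleIntegral_zpow_mul_eq (f : ℂ → ℂ) {ρ : ℝ} (hρ : ρ ≠ 0) (n : ℤ) :
    (∮ z in C(0, ρ), z ^ (-n - 1) * f z) = 2 * π * I * ρ ^ (-n) * circleFourierCoeff f ρ n := by
  rw [circleIntegral, circleFourierCoeff, fourierCoeffOn_eq_integral, sub_zero, real_smul,
    ← mul_assoc, ← intervalIntegral.integral_const_mul]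
  refine intervalIntegral.integral_congr fun θ _ => ?_
  simp only [deriv_circleMap, fourier_coe_apply, circleMap_zero_zpow, smul_eq_mul]
  simp only [circleMap_zero]
  have hρn : (ρ : ℂ) ^ (-n) = ρ * ρ ^ (-n - 1) := by
    rw [← zpow_one_add₀ (ofReal_ne_zero.2 hρ)]; ring_nf
  have hexp : 2 * π * I * ((-n : ℤ) : ℂ) * θ / ((2 * π : ℝ) : ℂ)
      = θ * I + (((-n - 1 : ℤ) * θ : ℝ) : ℂ) * I := by
    push_cast; field_simp; ring
  rw [hρn, hexp, Complex.exp_add]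
  push_cast
  field_simp

lemma mul_circleFourierCoeff_deriv {f : ℂ → ℂ} {U : Set ℂ} (hU : IsOpen U)
    (hf : DifferentiableOn ℂ f U) {ρ : ℝ} (hρ : 0 < ρ) (hsub : sphere 0 ρ ⊆ U) (n : ℤ) :
    ρ * circleFourierCoeff (deriv f) ρ (n - 1) = n * circleFourierCoeff f ρ n := by
  have hne : ∀ z ∈ sphere (0 : ℂ) ρ, z ≠ 0 := fun z hz => ne_of_mem_sphere hz hρ.ne'
  have hzpow (m : ℤ) : ContinuousOn (fun z : ℂ => z ^ m) (sphere 0 ρ) :=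
    continuousOn_id.zpow₀ m fun z hz => Or.inl (hne z hz)
  -- integration by parts: `∮ (z ^ (-n) * f z)' = 0`, expanded by the product rule
  have hexact :
      (∮ z in C(0, ρ), (((-n : ℤ) : ℂ) * z ^ (-n - 1) * f z + z ^ (-n) * deriv f z)) = 0 :=
    circleIntegral.integral_eq_zero_of_hasDerivWithinAt hρ.le fun z hz =>
      ((hasDerivAt_zpow (-n) z (Or.inl (hne z hz))).mul
        (hf.differentiableAt (hU.mem_nhds (hsub hz))).hasDerivAt).hasDerivWithinAt
  have hshift (z : ℂ) : z ^ (-n) = z ^ (-(n - 1) - 1) := by ring_nf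
  simp only [mul_assoc, hshift] at hexact
  rw [circleIntegral.integral_add, circleIntegral.integral_const_mul,
    circleIntegral_zpow_mul_eq _ hρ.ne', circleIntegral_zpow_mul_eq _ hρ.ne'] at hexact
  · have hρn : (ρ : ℂ) ^ (-(n - 1)) = ρ * ρ ^ (-n) := by
      rw [← zpow_one_add₀ (ofReal_ne_zero.2 hρ.ne')]; ring_nf
    have hfactored : (2 * π * I * (ρ : ℂ) ^ (-n)) * (ρ * circleFourierCoeff (deriv f) ρ (n - 1)
        - n * circleFourierCoeff f ρ n) = 0 := by
      rw [← hexact, hρn]; push_cast; ring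
    have h2πIρ : 2 * π * I * (ρ : ℂ) ^ (-n) ≠ 0 := by
      simp [pi_ne_zero, zpow_ne_zero, hρ.ne']
    exact sub_eq_zero.1 ((mul_eq_zero.1 hfactored).resolve_left h2πIρ)
  · exact (continuousOn_const.mul ((hzpow _).mul (hf.continuousOn.mono hsub))).circleIntegrable
      hρ.le
  · exact ((hzpow _).mul ((hf.deriv hU).continuousOn.mono hsub)).circleIntegrable hρ.le

lemma hasSum_two_mul_sq_sub_one_mul_sq_circleFourierCoeff {f : ℂ → ℂ} {U : Set ℂ}
    (hU : IsOpen U) (hf : DifferentiableOn ℂ f U) {ρ : ℝ} (hρ : 0 < ρ) (hsub : sphere 0 ρ ⊆ U)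
    (heq : 2 * ρ ^ 2 * ∫ θ in 0..2 * π, ‖deriv f (circleMap 0 ρ θ)‖ ^ 2
      = ∫ θ in 0..2 * π, ‖f (circleMap 0 ρ θ)‖ ^ 2) :
    HasSum (fun n : ℤ => (2 * n ^ 2 - 1) * ‖circleFourierCoeff f ρ n‖ ^ 2) 0 := by
  have hsq := hasSum_sq_circleFourierCoeff hρ.le (hf.continuousOn.mono hsub)
  have hsq' := hasSum_sq_circleFourierCoeff hρ.le ((hf.deriv hU).continuousOn.mono hsub)
  rw [← (Equiv.subRight (1 : ℤ)).hasSum_iff] at hsq'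
  have hweighted : HasSum (fun n : ℤ => 2 * n ^ 2 * ‖circleFourierCoeff f ρ n‖ ^ 2)
      ((2 * π)⁻¹ * ∫ θ in 0..2 * π, ‖f (circleMap 0 ρ θ)‖ ^ 2) := by
    rw [← heq, mul_left_comm]
    refine (hsq'.mul_left (2 * ρ ^ 2)).congr_fun fun n => ?_
    have h := congrArg (‖·‖ ^ 2) (mul_circleFourierCoeff_deriv hU hf hρ hsub n)
    simp only [norm_mul, mul_pow, norm_real, norm_intCast, Real.norm_eq_abs, sq_abs] at h
    simp only [Function.comp_apply, Equiv.subRight_apply]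
    linear_combination -2 * h
  simpa [sub_mul] using hweighted.sub hsq

def annulus (R₀ R₁ : ℝ) : Set ℂ := {z : ℂ | R₀ < ‖z‖ ∧ ‖z‖ < R₁}

lemma isOpen_annulus (R₀ R₁ : ℝ) : IsOpen (annulus R₀ R₁) :=
  isOpen_Ioo.preimage continuous_norm

lemma sphere_subset_annulus {R₀ R₁ ρ : ℝ} (hρ : ρ ∈ Ioo R₀ R₁) : sphere 0 ρ ⊆ annulus R₀ R₁ := by
  intro z hz
  rw [mem_sphere_zero_iff_norm] at hz
  exact ⟨hz ▸ hρ.1, hz ▸ hρ.2⟩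

lemma ne_zero_of_mem_annulus {R₀ R₁ : ℝ} (hR₀ : 0 ≤ R₀) {z : ℂ} (hz : z ∈ annulus R₀ R₁) :
    z ≠ 0 :=
  norm_pos_iff.1 (hR₀.trans_lt hz.1)

lemma circleIntegral_eq_of_differentiableOn_annulus {R₀ R₁ : ℝ} (hR₀ : 0 ≤ R₀) {f : ℂ → ℂ}
    (hf : DifferentiableOn ℂ f (annulus R₀ R₁)) {ρ σ : ℝ} (hρ : ρ ∈ Ioo R₀ R₁)
    (hσ : σ ∈ Ioo R₀ R₁) : (∮ z in C(0, ρ), f z) = ∮ z in C(0, σ), f z := by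
  wlog hle : ρ ≤ σ generalizing ρ σ
  · exact (this hσ hρ (le_of_not_ge hle)).symm
  have hsub : closedBall 0 σ \ ball 0 ρ ⊆ annulus R₀ R₁ := fun z ⟨hzσ, hzρ⟩ => by
    rw [mem_closedBall_zero_iff] at hzσ
    rw [mem_ball_zero_iff, not_lt] at hzρ
    exact ⟨hρ.1.trans_le hzρ, hzσ.trans_lt hσ.2⟩
  refine (circleIntegral_eq_of_differentiable_on_annulus_off_countable (hR₀.trans_lt hρ.1) hle
    countable_empty (hf.continuousOn.mono hsub) fun z ⟨⟨hzσ, hzρ⟩, _⟩ => ?_).symm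
  rw [mem_ball_zero_iff] at hzσ
  rw [mem_closedBall_zero_iff, not_le] at hzρ
  exact hf.differentiableAt ((isOpen_annulus R₀ R₁).mem_nhds ⟨hρ.1.trans hzρ, hzσ.trans hσ.2⟩)

lemma zpow_neg_mul_circleFourierCoeff_eq {R₀ R₁ : ℝ} (hR₀ : 0 ≤ R₀) {f : ℂ → ℂ}
    (hf : DifferentiableOn ℂ f (annulus R₀ R₁)) {ρ σ : ℝ} (hρ : ρ ∈ Ioo R₀ R₁)
    (hσ : σ ∈ Ioo R₀ R₁) (n : ℤ) :
    (ρ : ℂ) ^ (-n) * circleFourierCoeff f ρ n = (σ : ℂ) ^ (-n) * circleFourierCoeff f σ n := by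
  have hg : DifferentiableOn ℂ (fun z => z ^ (-n - 1) * f z) (annulus R₀ R₁) := fun z hz =>
    (differentiableAt_zpow.2 (Or.inl (ne_zero_of_mem_annulus hR₀ hz))).differentiableWithinAt.mul
      (hf z hz)
  have h := circleIntegral_eq_of_differentiableOn_annulus hR₀ hg hρ hσ
  rw [circleIntegral_zpow_mul_eq f (hR₀.trans_lt hρ.1).ne',
    circleIntegral_zpow_mul_eq f (hR₀.trans_lt hσ.1).ne', mul_assoc _ ((ρ : ℂ) ^ (-n)),
    mul_assoc _ ((σ : ℂ) ^ (-n))] at h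
  exact mul_left_cancel₀ (by simp [pi_ne_zero]) h

lemma eq_zero_of_hasSum_mul_sq_zpow {c : ℤ → ℝ} (hc : ∀ n ≠ 0, 0 ≤ c n) {a b : ℝ} (ha : 0 ≤ a)
    (hab : a < b) (hs : ∀ ρ ∈ Ioo a b, HasSum (fun n => c n * (ρ ^ n) ^ 2) 0) : c = 0 := by
  obtain ⟨ρ₁, ha₁, h₁b⟩ := exists_between hab
  obtain ⟨ρ₃, h₁₃, h₃b⟩ := exists_between h₁b
  have hρ₁ : 0 < ρ₁ := ha.trans_lt ha₁
  set ρ₂ := √(ρ₁ * ρ₃)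
  have hρ₂ : ρ₂ ^ 2 = ρ₁ * ρ₃ := sq_sqrt (by nlinarith)
  have h₁₂ : ρ₁ < ρ₂ := lt_sqrt_of_sq_lt (by nlinarith)
  have h₂₃ : ρ₂ < ρ₃ := (sqrt_lt' (hρ₁.trans h₁₃)).2 (by nlinarith)
  have hgap : HasSum (fun n => c n * (ρ₁ ^ n - ρ₃ ^ n) ^ 2) 0 := by
    have h := ((hs ρ₁ ⟨ha₁, h₁b⟩).add (hs ρ₃ ⟨ha₁.trans h₁₃, h₃b⟩)).sub
      ((hs ρ₂ ⟨ha₁.trans h₁₂, h₂₃.trans h₃b⟩).mul_left 2)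
    norm_num at h
    refine h.congr_fun fun n => ?_
    rw [show (ρ₂ ^ n) ^ 2 = ρ₁ ^ n * ρ₃ ^ n by rw [sq, ← mul_zpow, ← sq, hρ₂, mul_zpow]]
    ring
  have hterm := (hasSum_zero_iff_of_nonneg fun n => ?_).1 hgap
  · have hne : ∀ n ≠ 0, c n = 0 := fun n hn => by
      have hsub : ρ₁ ^ n - ρ₃ ^ n ≠ 0 := sub_ne_zero.2 fun h =>
        h₁₃.ne ((zpow_left_inj₀ hρ₁.le (hρ₁.trans h₁₃).le hn).1 h)
      simpa [hsub] using congrFun hterm n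
    have h₀ := (hs ρ₁ ⟨ha₁, h₁b⟩).unique (hasSum_single 0 fun n hn => by simp [hne n hn])
    ext n
    rcases eq_or_ne n 0 with rfl | hn
    · simpa using h₀.symm
    · exact hne n hn
  · rcases eq_or_ne n 0 with rfl | hn
    · simp
    · exact mul_nonneg (hc n hn) (sq_nonneg _)

theorem stmt_12_general (R₀ R₁ : ℝ) (hR₀ : 0 ≤ R₀) (G : ℂ → ℂ)
    (hG : DifferentiableOn ℂ G
      {z : ℂ | R₀ < ‖z‖ ∧ ‖z‖ < R₁})
    (heq : ∀ ρ : ℝ, R₀ < ρ → ρ < R₁ →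
      2 * ρ ^ 2 * ∫ θ in (0:ℝ)..(2 * π),
          ‖deriv G ((ρ : ℂ) * Complex.exp (θ * Complex.I))‖ ^ 2
        = ∫ θ in (0:ℝ)..(2 * π),
            ‖G ((ρ : ℂ) * Complex.exp (θ * Complex.I))‖ ^ 2) :
    ∀ z : ℂ, R₀ < ‖z‖ → ‖z‖ < R₁ → G z = 0 := by
  intro z hz₀ hz₁
  have hσ : ‖z‖ ∈ Ioo R₀ R₁ := ⟨hz₀, hz₁⟩
  set a : ℤ → ℂ := fun n => (‖z‖ : ℂ) ^ (-n) * circleFourierCoeff G ‖z‖ n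
  have hcoeff :
      ∀ ρ ∈ Ioo R₀ R₁, ∀ n, ‖circleFourierCoeff G ρ n‖ ^ 2 = ‖a n‖ ^ 2 * (ρ ^ n) ^ 2 := by
    intro ρ hρ n
    have hρ₀ : 0 < ρ := hR₀.trans_lt hρ.1
    rw [show a n = ρ ^ (-n) * circleFourierCoeff G ρ n from
      (zpow_neg_mul_circleFourierCoeff_eq hR₀ hG hρ hσ n).symm, norm_mul, norm_zpow, norm_real,
      Real.norm_of_nonneg hρ₀.le, zpow_neg]
    field_simp
  have hzero : (fun n : ℤ => (2 * n ^ 2 - 1) * ‖a n‖ ^ 2) = 0 := by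
    refine eq_zero_of_hasSum_mul_sq_zpow (fun n hn => ?_) hR₀ (hz₀.trans hz₁) fun ρ hρ => ?_
    · have : (1 : ℝ) ≤ n ^ 2 :=
        (one_le_sq_iff_one_le_abs _).2 (by exact_mod_cast Int.one_le_abs hn)
      exact mul_nonneg (by linarith) (sq_nonneg _)
    · simpa only [mul_assoc, hcoeff ρ hρ] using
        hasSum_two_mul_sq_sub_one_mul_sq_circleFourierCoeff (isOpen_annulus R₀ R₁) hG
          (hR₀.trans_lt hρ.1) (sphere_subset_annulus hρ)
          (by simpa only [circleMap_zero] using heq ρ hρ.1 hρ.2)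
  have hσcoeff : ∀ n, circleFourierCoeff G ‖z‖ n = 0 := fun n => by
    have hn : 2 * (n : ℝ) ^ 2 - 1 ≠ 0 := fun h => by
      have : (2 * n ^ 2 : ℤ) = 1 := by exact_mod_cast sub_eq_zero.1 h
      omega
    have ha : a n = 0 := by simpa [hn] using congrFun hzero n
    exact (mul_eq_zero.1 ha).resolve_left
      (zpow_ne_zero _ (by simpa using (hR₀.trans_lt hz₀).ne'))
  exact eqOn_zero_of_circleFourierCoeff_eq_zero (norm_nonneg z)
    (hG.continuousOn.mono (sphere_subset_annulus hσ)) hσcoeff (mem_sphere_zero_iff_norm.2 rfl)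

/-- Rigidity: if `∫₀^{2π} G² dθ = 0` on some circle and equality
`2ρ² ∫ ‖G′‖² = ∫ ‖G‖²` holds on every circle, then `G ≡ 0` on the annulus. -/
theorem stmt_12 (R₀ R₁ : ℝ) (hR₀ : 0 ≤ R₀) (hR : R₀ < R₁) (G : ℂ → ℂ)
    (hG : DifferentiableOn ℂ G
      {z : ℂ | R₀ < ‖z‖ ∧ ‖z‖ < R₁})
    (r : ℝ) (hr₀ : R₀ < r) (hr₁ : r < R₁)
    (hint : ∫ θ in (0:ℝ)..(2 * π),
        (G ((r : ℂ) * Complex.exp (θ * Complex.I))) ^ 2 = 0)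
    (heq : ∀ ρ : ℝ, R₀ < ρ → ρ < R₁ →
      2 * ρ ^ 2 * ∫ θ in (0:ℝ)..(2 * π),
          ‖deriv G ((ρ : ℂ) * Complex.exp (θ * Complex.I))‖ ^ 2
        = ∫ θ in (0:ℝ)..(2 * π),
            ‖G ((ρ : ℂ) * Complex.exp (θ * Complex.I))‖ ^ 2) :
    ∀ z : ℂ, R₀ < ‖z‖ → ‖z‖ < R₁ → G z = 0 :=
  stmt_12_general R₀ R₁ hR₀ G hG heq
end

section
/- Let 0 ≤ R₀ < R₁ and let G₋, G₊ : ℂ → ℂ be holomorphic on the annulus A(R₀,R₁) = {z ∈ ℂ : R₀ < |z| < R₁}. Fix r with R₀ < r < R₁ and set c₋ = ∫₀^{2π} G₋(r·e^{iθ}) dθ and c₊ = ∫₀^{2π} G₊(r·e^{iθ}) dθ. Then 2·r²·∫₀^{2π} ( ‖G₋′(r·e^{iθ})‖² + ‖G₊′(r·e^{iθ})‖² ) dθ ≥ 2·∫₀^{2π} ( ‖G₋(r·e^{iθ})‖² + ‖G₊(r·e^{iθ})‖² ) dθ − (1/π)·( ‖c₋‖² + ‖c₊‖² ). -/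
/-!
Along the circle `|z| = r`, `f θ = G (r e^{iθ})` is `2π`-periodic with
`f' θ = i r e^{iθ} G' (r e^{iθ})`, so `‖f'‖ = r ‖G'‖`. Wirtinger's inequality
`∫ ‖f‖² - (2π)⁻¹ ‖∫ f‖² ≤ ∫ ‖f'‖²` follows from Parseval's identity: subtracting the mean
removes the zeroth Fourier coefficient, and integration by parts gives `‖f̂ n‖ = ‖f̂' n‖ / |n|`
for `n ≠ 0`. Adding the inequalities for `G₋` and `G₊` gives the claim.
-/

open Complex Real MeasureTheory Set Metric
open scoped Interval

theorem ContinuousOn.memLp_restrict_Ioc {E : Type*} [NormedAddCommGroup E] {f : ℝ → E}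
    {a b : ℝ} (hf : ContinuousOn f (Icc a b)) (p : ENNReal) :
    MemLp f p (volume.restrict (Ioc a b)) := by
  obtain ⟨C, hC⟩ := isCompact_Icc.exists_bound_of_continuousOn hf
  refine MemLp.of_bound ?_ C (ae_restrict_of_forall_mem measurableSet_Ioc
    fun x hx => hC x (Ioc_subset_Icc_self hx))
  exact (hf.mono Ioc_subset_Icc_self).aestronglyMeasurable measurableSet_Ioc

section Wirtinger

variable {a b : ℝ}

theorem fourierCoeffOn_zero (hab : a < b) (f : ℝ → ℂ) :
    fourierCoeffOn hab f 0 = (b - a)⁻¹ • ∫ x in a..b, f x := by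
  simp [fourierCoeffOn_eq_integral]

theorem fourierCoeffOn_eq_mul_fourierCoeffOn_deriv (hab : a < b) {f f' : ℝ → ℂ} {n : ℤ} (hn : n ≠ 0)
    (hf : ∀ x ∈ [[a, b]], HasDerivAt f (f' x) x) (hf' : IntervalIntegrable f' volume a b)
    (hfab : f a = f b) :
    fourierCoeffOn hab f n = ((b - a : ℝ) : ℂ) / (2 * π * I * n) * fourierCoeffOn hab f' n := by
  rw [fourierCoeffOn_of_hasDerivAt hab hn hf hf', hfab, sub_self, mul_zero, zero_sub]
  have : (n : ℂ) ≠ 0 := Int.cast_ne_zero.mpr hn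
  field_simp
  push_cast
  ring

theorem norm_fourierCoeffOn_le_of_hasDerivAt (hab : a < b) {f f' : ℝ → ℂ} {n : ℤ} (hn : n ≠ 0)
    (hf : ∀ x ∈ [[a, b]], HasDerivAt f (f' x) x) (hf' : IntervalIntegrable f' volume a b)
    (hfab : f a = f b) :
    ‖fourierCoeffOn hab f n‖ ≤ (b - a) / (2 * π) * ‖fourierCoeffOn hab f' n‖ := by
  have hn1 : (1 : ℝ) ≤ |(n : ℝ)| := by exact_mod_cast Int.one_le_abs hn
  have hfactor : ‖((b - a : ℝ) : ℂ) / (2 * π * I * n)‖ = (b - a) / (2 * π * |(n : ℝ)|) := by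
    rw [norm_div, norm_real, Real.norm_of_nonneg (sub_nonneg.2 hab.le)]
    simp [abs_of_pos pi_pos]
  rw [fourierCoeffOn_eq_mul_fourierCoeffOn_deriv hab hn hf hf' hfab, norm_mul, hfactor]
  gcongr ?_ * _
  exact div_le_div_of_nonneg_left (sub_nonneg.2 hab.le) (by positivity)
    (le_mul_of_one_le_right (by positivity) hn1)

theorem wirtinger_inequality (hab : a < b) {f f' : ℝ → ℂ}
    (hf : ∀ x ∈ [[a, b]], HasDerivAt f (f' x) x) (hf' : MemLp f' 2 (volume.restrict (Ioc a b))) (hfab : f a = f b) :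
    (∫ x in a..b, ‖f x‖ ^ 2) - (b - a)⁻¹ * ‖∫ x in a..b, f x‖ ^ 2
      ≤ ((b - a) / (2 * π)) ^ 2 * ∫ x in a..b, ‖f' x‖ ^ 2 := by
  have hfc : ContinuousOn f (Icc a b) := fun x hx =>
    (hf x (by rwa [uIcc_of_le hab.le])).continuousAt.continuousWithinAt
  have hf'i : IntervalIntegrable f' volume a b :=
    (intervalIntegrable_iff_integrableOn_Ioc_of_le hab.le).2 (hf'.integrable one_le_two)
  have hA0 : ‖fourierCoeffOn hab f 0‖ ^ 2 = (b - a)⁻¹ ^ 2 * ‖∫ x in a..b, f x‖ ^ 2 := by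
    rw [fourierCoeffOn_zero, norm_smul, norm_inv, Real.norm_of_nonneg (sub_nonneg.2 hab.le),
      mul_pow]
  set A := fourierCoeffOn hab f
  set B := fourierCoeffOn hab f'
  set c := (b - a) / (2 * π)
  -- Parseval for `f`, compared termwise with Parseval for `f'` off the zeroth coefficient.
  have hterm (n : ℤ) : ‖A n‖ ^ 2 ≤ (if n = 0 then ‖A 0‖ ^ 2 else 0) + c ^ 2 * ‖B n‖ ^ 2 := by
    rcases eq_or_ne n 0 with rfl | hn
    · rw [if_pos rfl]
      have := mul_nonneg (sq_nonneg c) (sq_nonneg ‖B 0‖)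
      linarith
    · rw [if_neg hn, zero_add, ← mul_pow]
      exact pow_le_pow_left₀ (norm_nonneg _)
        (norm_fourierCoeffOn_le_of_hasDerivAt hab hn hf hf'i hfab) 2
  have hle := hasSum_le hterm (hasSum_sq_fourierCoeffOn hab (hfc.memLp_restrict_Ioc 2))
    ((hasSum_ite_eq 0 _).add ((hasSum_sq_fourierCoeffOn hab hf').mul_left _))
  rw [hA0, smul_eq_mul, smul_eq_mul] at hle
  set I := ∫ x in a..b, ‖f x‖ ^ 2
  set J := ∫ x in a..b, ‖f' x‖ ^ 2
  set K := ‖∫ x in a..b, f x‖ ^ 2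
  have hL : 0 < b - a := sub_pos.2 hab
  calc I - (b - a)⁻¹ * K = (b - a) * ((b - a)⁻¹ * I - (b - a)⁻¹ ^ 2 * K) := by field_simp
    _ ≤ (b - a) * (c ^ 2 * ((b - a)⁻¹ * J)) := by gcongr; linarith
    _ = c ^ 2 * J := by field_simp

end Wirtinger

section circleMap

variable {G : ℂ → ℂ} {U : Set ℂ} {c : ℂ} {R : ℝ}

theorem ContinuousOn.comp_circleMap (hG : ContinuousOn G U) (hsub : sphere c |R| ⊆ U) :
    Continuous fun θ => G (circleMap c R θ) :=
  hG.comp_continuous (continuous_circleMap c R) fun θ => hsub (circleMap_mem_sphere' c R θ)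

theorem continuous_deriv_comp_circleMap (hG : DifferentiableOn ℂ G U) (hU : IsOpen U)
    (hsub : sphere c |R| ⊆ U) :
    Continuous fun θ => deriv G (circleMap c R θ) :=
  (hG.analyticOnNhd hU).deriv.continuousOn.comp_circleMap hsub

theorem wirtinger_inequality_circleMap (hG : DifferentiableOn ℂ G U) (hU : IsOpen U)
    (hsub : sphere c |R| ⊆ U) :
    (∫ θ in 0..2 * π, ‖G (circleMap c R θ)‖ ^ 2)
        - (2 * π)⁻¹ * ‖∫ θ in 0..2 * π, G (circleMap c R θ)‖ ^ 2
      ≤ R ^ 2 * ∫ θ in 0..2 * π, ‖deriv G (circleMap c R θ)‖ ^ 2 := by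
  have hder (θ : ℝ) : HasDerivAt (fun θ => G (circleMap c R θ))
      (deriv G (circleMap c R θ) * (circleMap 0 R θ * I)) θ :=
    (hG.differentiableAt (hU.mem_nhds (hsub (circleMap_mem_sphere' c R θ)))).hasDerivAt.comp θ
      (hasDerivAt_circleMap c R θ)
  have hder_cont : Continuous fun θ => deriv G (circleMap c R θ) * (circleMap 0 R θ * I) :=
    (continuous_deriv_comp_circleMap hG hU hsub).mul (by fun_prop)
  have h := wirtinger_inequality two_pi_pos (fun θ _ => hder θ)
    (hder_cont.continuousOn.memLp_restrict_Ioc 2)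
    (congrArg G (by simpa using (periodic_circleMap c R 0).symm))
  -- `‖circleMap 0 R θ * I‖ = |R|`, and the Wirtinger constant on `[0, 2π]` is `1`.
  simpa [mul_pow, two_pi_pos.ne', mul_comm] using h

end circleMap

theorem stmt_18_general (R₀ R₁ : ℝ) (hR₀ : 0 ≤ R₀) (Gm Gp : ℂ → ℂ)
    (hGm : DifferentiableOn ℂ Gm
      {z : ℂ | R₀ < ‖z‖ ∧ ‖z‖ < R₁})
    (hGp : DifferentiableOn ℂ Gp
      {z : ℂ | R₀ < ‖z‖ ∧ ‖z‖ < R₁})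
    (r : ℝ) (hr₀ : R₀ < r) (hr₁ : r < R₁) (cm cp : ℂ)
    (hcm : cm = ∫ θ in (0:ℝ)..(2 * π),
      Gm ((r : ℂ) * Complex.exp (θ * Complex.I)))
    (hcp : cp = ∫ θ in (0:ℝ)..(2 * π),
      Gp ((r : ℂ) * Complex.exp (θ * Complex.I))) :
    2 * r ^ 2 * ∫ θ in (0:ℝ)..(2 * π),
        (‖deriv Gm ((r : ℂ) * Complex.exp (θ * Complex.I))‖ ^ 2
          + ‖deriv Gp ((r : ℂ) * Complex.exp (θ * Complex.I))‖ ^ 2)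
      ≥ 2 * (∫ θ in (0:ℝ)..(2 * π),
          (‖Gm ((r : ℂ) * Complex.exp (θ * Complex.I))‖ ^ 2
            + ‖Gp ((r : ℂ) * Complex.exp (θ * Complex.I))‖ ^ 2))
        - (1 / π) * (‖cm‖ ^ 2 + ‖cp‖ ^ 2) := by
  set U := {z : ℂ | R₀ < ‖z‖ ∧ ‖z‖ < R₁}
  have hU : IsOpen U := isOpen_Ioo.preimage continuous_norm
  have hsub : sphere (0 : ℂ) |r| ⊆ U := fun z hz => by
    rw [mem_sphere_zero_iff_norm, abs_of_pos (hR₀.trans_lt hr₀)] at hz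
    exact ⟨hz ▸ hr₀, hz ▸ hr₁⟩
  have hm := wirtinger_inequality_circleMap hGm hU hsub
  have hp := wirtinger_inequality_circleMap hGp hU hsub
  simp only [← circleMap_zero] at hcm hcp ⊢
  subst hcm hcp
  have hint {G : ℂ → ℂ} (hG : Continuous fun θ => G (circleMap 0 r θ)) :
      IntervalIntegrable (fun θ => ‖G (circleMap 0 r θ)‖ ^ 2) volume 0 (2 * π) :=
    (hG.norm.pow 2).intervalIntegrable _ _
  rw [intervalIntegral.integral_add (hint (continuous_deriv_comp_circleMap hGm hU hsub))
      (hint (continuous_deriv_comp_circleMap hGp hU hsub)),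
    intervalIntegral.integral_add (hint (hGm.continuousOn.comp_circleMap hsub))
      (hint (hGp.continuousOn.comp_circleMap hsub)),
    show 1 / π = 2 * (2 * π)⁻¹ by field_simp]
  linarith

/-- The convexity estimate `L″(t) ≥ 4L(t) − (1/π)(‖c₋‖² + ‖c₊‖²)` in integral
form, for two holomorphic functions `G₋, G₊` on an annulus. -/
theorem stmt_18 (R₀ R₁ : ℝ) (hR₀ : 0 ≤ R₀) (hR : R₀ < R₁) (Gm Gp : ℂ → ℂ)
    (hGm : DifferentiableOn ℂ Gm
      {z : ℂ | R₀ < ‖z‖ ∧ ‖z‖ < R₁})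
    (hGp : DifferentiableOn ℂ Gp
      {z : ℂ | R₀ < ‖z‖ ∧ ‖z‖ < R₁})
    (r : ℝ) (hr₀ : R₀ < r) (hr₁ : r < R₁) (cm cp : ℂ)
    (hcm : cm = ∫ θ in (0:ℝ)..(2 * π),
      Gm ((r : ℂ) * Complex.exp (θ * Complex.I)))
    (hcp : cp = ∫ θ in (0:ℝ)..(2 * π),
      Gp ((r : ℂ) * Complex.exp (θ * Complex.I))) :
    2 * r ^ 2 * ∫ θ in (0:ℝ)..(2 * π),
        (‖deriv Gm ((r : ℂ) * Complex.exp (θ * Complex.I))‖ ^ 2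
          + ‖deriv Gp ((r : ℂ) * Complex.exp (θ * Complex.I))‖ ^ 2)
      ≥ 2 * (∫ θ in (0:ℝ)..(2 * π),
          (‖Gm ((r : ℂ) * Complex.exp (θ * Complex.I))‖ ^ 2
            + ‖Gp ((r : ℂ) * Complex.exp (θ * Complex.I))‖ ^ 2))
        - (1 / π) * (‖cm‖ ^ 2 + ‖cp‖ ^ 2) :=
  stmt_18_general R₀ R₁ hR₀ Gm Gp hGm hGp r hr₀ hr₁ cm cp hcm hcp
end
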